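/- Weak bisimilarity is an equivariant equivalence relation: it is reflexive, symmetric, transitive, and closed under name permutations. -/

import Mathlib

open scoped Classical

universe u v

abbrev Atom : Type := ℕ

/-- A permutation of atoms is finitary if it moves only finitely many atoms. -/
def IsFinPerm (π : Equiv.Perm Atom) : Prop := {a : Atom | π a ≠ a}.Finite

/-- `N` supports `x` with respect to the permutation action `act`. -/
def SupportsAct {X : Type*} (act : Equiv.Perm Atom → X → X) (N : Set Atom) (x : X) : Prop :=
  ∀ π : Equiv.Perm Atom, IsFinPerm π → (∀ a ∈ N, π a = a) → act π x = x

/-- The support of `x`: the intersection of all finite supporting sets. -/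
def suppAct {X : Type*} (act : Equiv.Perm Atom → X → X) (x : X) : Set Atom :=
  ⋂₀ {N : Set Atom | N.Finite ∧ SupportsAct act N x}

/-- `x` is finitely supported. -/
def FinSuppAct {X : Type*} (act : Equiv.Perm Atom → X → X) (x : X) : Prop :=
  ∃ N : Set Atom, N.Finite ∧ SupportsAct act N x

/-- The pointwise action on subsets. -/
def setAct {X : Type*} (act : Equiv.Perm Atom → X → X) (π : Equiv.Perm Atom) (s : Set X) :
    Set X :=
  act π '' s

/-- A nominal set: a permutation action where every element is finitely supported. -/
structure Nominal (X : Type*) where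
  act : Equiv.Perm Atom → X → X
  act_one : ∀ x, act 1 x = x
  act_mul : ∀ π π' x, act (π * π') x = act π (act π' x)
  finSupp : ∀ x, FinSuppAct act x

/-- A nominal transition system. -/
structure NTS (States Pred Act : Type*) where
  nomS : Nominal States
  nomP : Nominal Pred
  nomA : Nominal Act
  sat : States → Pred → Prop
  sat_eqv : ∀ π, IsFinPerm π → ∀ P φ, sat P φ → sat (nomS.act π P) (nomP.act π φ)
  bn : Act → Finset Atom
  bn_eqv : ∀ π, IsFinPerm π → ∀ α, (bn (nomA.act π α) : Set Atom) = π '' (bn α : Set Atom)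
  bn_supp : ∀ α, (bn α : Set Atom) ⊆ suppAct nomA.act α
  tr : States → Act → States → Prop
  tr_eqv : ∀ π, IsFinPerm π → ∀ P α P', tr P α P' →
    tr (nomS.act π P) (nomA.act π α) (nomS.act π P')
  tr_alpha : ∀ (a b : Atom) (P : States) (α : Act) (P' : States), a ∈ bn α →
    b ∉ suppAct nomA.act α → b ∉ suppAct nomS.act P' → tr P α P' →
    tr P (nomA.act (Equiv.swap a b) α) (nomS.act (Equiv.swap a b) P')

variable {S Pr Ac : Type*}

/-- A (strong) bisimulation: symmetric, statically implicating, and simulating. -/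
def NTS.IsBisim (T : NTS S Pr Ac) (R : S → S → Prop) : Prop :=
  (∀ P Q, R P Q → R Q P) ∧
  ∀ P Q, R P Q →
    (∀ φ, T.sat P φ → T.sat Q φ) ∧
    (∀ α P', (∀ a ∈ T.bn α, a ∉ suppAct T.nomS.act Q) → T.tr P α P' →
      ∃ Q', T.tr Q α Q' ∧ R P' Q')

/-- Bisimilarity. -/
def NTS.Bisim (T : NTS S Pr Ac) (P Q : S) : Prop := ∃ R, T.IsBisim R ∧ R P Q

/-- `P ⟹ P'`: a finite (possibly empty) sequence of `τ`-transitions. -/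
inductive TauStar (T : NTS S Pr Ac) (τ : Ac) : S → S → Prop
  | refl (P : S) : TauStar T τ P P
  | step {P P'' P' : S} : T.tr P τ P'' → TauStar T τ P'' P' → TauStar T τ P P'

/-- The weak transition `P ⟹α⟹ P'`: just `⟹` if `α = τ`, otherwise
`⟹ ∘ ⟶α⟶ ∘ ⟹`. -/
def NTS.weakTr (T : NTS S Pr Ac) (τ : Ac) (P : S) (α : Ac) (P' : S) : Prop :=
  if α = τ then TauStar T τ P P'
  else ∃ P₁ P₂, TauStar T τ P P₁ ∧ T.tr P₁ α P₂ ∧ TauStar T τ P₂ P'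

/-- A weak bisimulation: symmetric, satisfying weak static implication and weak
simulation. -/
def NTS.IsWeakBisim (T : NTS S Pr Ac) (τ : Ac) (R : S → S → Prop) : Prop :=
  (∀ P Q, R P Q → R Q P) ∧
  ∀ P Q, R P Q →
    (∀ φ, T.sat P φ → ∃ Q', TauStar T τ Q Q' ∧ T.sat Q' φ ∧ R P Q') ∧
    (∀ α P', (∀ a ∈ T.bn α, a ∉ suppAct T.nomS.act Q) → T.tr P α P' →
      ∃ Q', T.weakTr τ Q α Q' ∧ R P' Q')

/-- Weak bisimilarity. -/
def NTS.WBisim (T : NTS S Pr Ac) (τ : Ac) (P Q : S) : Prop :=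
  ∃ R, T.IsWeakBisim τ R ∧ R P Q

-- ### permutation lemmas

lemma isFinPerm_one : IsFinPerm (1 : Equiv.Perm Atom) := by
  simp [IsFinPerm]

lemma exists_fresh (s : Set Atom) (hs : s.Finite) : ∃ a, a ∉ s :=
  hs.infinite_compl.nonempty

lemma isFinPerm_swap (a b : Atom) : IsFinPerm (Equiv.swap a b) := by
  apply Set.Finite.subset ((Set.finite_singleton b).insert a)
  intro x hx
  by_contra h
  simp only [Set.mem_insert_iff, Set.mem_singleton_iff, not_or] at h
  exact hx (Equiv.swap_apply_of_ne_of_ne h.1 h.2)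

lemma IsFinPerm.mul {π π' : Equiv.Perm Atom} (h : IsFinPerm π) (h' : IsFinPerm π') :
    IsFinPerm (π * π') := by
  apply Set.Finite.subset (h.union h')
  intro x hx
  by_contra hc
  simp only [Set.mem_union, Set.mem_setOf_eq, not_or, not_not] at hc
  exact hx (by simp [Equiv.Perm.mul_apply, hc.1, hc.2])

lemma IsFinPerm.inv {π : Equiv.Perm Atom} (h : IsFinPerm π) : IsFinPerm π⁻¹ := by
  have heq : {a : Atom | π⁻¹ a ≠ a} = {a : Atom | π a ≠ a} := by
    ext a
    simp only [Set.mem_setOf_eq]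
    constructor
    · intro ha hc
      exact ha (by nth_rewrite 1 [← hc]; exact π.symm_apply_apply a)
    · intro ha hc
      exact ha (by nth_rewrite 1 [← hc]; exact π.apply_symm_apply a)
  show Set.Finite _
  rw [heq]
  exact h

namespace Nominal

variable {X : Type*} (M : Nominal X)

lemma act_act (π π' : Equiv.Perm Atom) (x : X) :
    M.act π (M.act π' x) = M.act (π * π') x := (M.act_mul π π' x).symm

lemma act_inv_act (π : Equiv.Perm Atom) (x : X) : M.act π⁻¹ (M.act π x) = x := by
  rw [act_act, inv_mul_cancel, M.act_one]

lemma act_act_inv (π : Equiv.Perm Atom) (x : X) : M.act π (M.act π⁻¹ x) = x := by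
  rw [act_act, mul_inv_cancel, M.act_one]

lemma suppAct_subset {N : Set Atom} {x : X} (hfin : N.Finite) (hs : SupportsAct M.act N x) :
    suppAct M.act x ⊆ N := Set.sInter_subset_of_mem ⟨hfin, hs⟩

lemma suppAct_finite (x : X) : (suppAct M.act x).Finite := by
  obtain ⟨N, hN, hs⟩ := M.finSupp x
  exact hN.subset (M.suppAct_subset hN hs)

lemma not_mem_suppAct {a : Atom} {x : X}
    (h : a ∉ suppAct M.act x) : ∃ N : Set Atom, N.Finite ∧ SupportsAct M.act N x ∧ a ∉ N := by
  simp only [suppAct, Set.mem_sInter, Set.mem_setOf_eq, not_forall] at h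
  obtain ⟨N, ⟨h1, h2⟩, h3⟩ := h
  exact ⟨N, h1, h2, h3⟩

lemma act_swap_fix {N : Set Atom} {x : X} (hs : SupportsAct M.act N x) {a b : Atom}
    (ha : a ∉ N) (hb : b ∉ N) : M.act (Equiv.swap a b) x = x := by
  apply hs _ (isFinPerm_swap a b)
  intro c hc
  exact Equiv.swap_apply_of_ne_of_ne (fun h => ha (h ▸ hc)) (fun h => hb (h ▸ hc))

lemma supports_act {N : Set Atom} {x : X} (hs : SupportsAct M.act N x)
    {π : Equiv.Perm Atom} (hπ : IsFinPerm π) :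
    SupportsAct M.act (π '' N) (M.act π x) := by
  intro σ hσ hfix
  have key : M.act (π⁻¹ * σ * π) x = x := by
    apply hs _ ((hπ.inv.mul hσ).mul hπ)
    intro a ha
    simp only [Equiv.Perm.mul_apply]
    rw [hfix (π a) ⟨a, ha, rfl⟩, (show π⁻¹ (π a) = a from π.symm_apply_apply a)]
  calc M.act σ (M.act π x) = M.act (σ * π) x := M.act_act σ π x
    _ = M.act (π * (π⁻¹ * σ * π)) x := by group
    _ = M.act π (M.act (π⁻¹ * σ * π) x) := M.act_mul _ _ x
    _ = M.act π x := by rw [key]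

lemma suppAct_act_subset (x : X) {π : Equiv.Perm Atom} (hπ : IsFinPerm π) :
    suppAct M.act (M.act π x) ⊆ π '' suppAct M.act x := by
  intro a ha
  refine ⟨π⁻¹ a, ?_, π.apply_symm_apply a⟩
  by_contra h
  obtain ⟨N, hN, hs, haN⟩ := M.not_mem_suppAct h
  have := M.suppAct_subset (hN.image π) (M.supports_act hs hπ)
  have haN' : a ∉ π '' N := by
    rintro ⟨c, hc, rfl⟩
    exact haN (by rwa [(show π⁻¹ (π c) = c from π.symm_apply_apply c)])
  exact haN' (this ha)

lemma suppAct_act (x : X) {π : Equiv.Perm Atom} (hπ : IsFinPerm π) :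
    suppAct M.act (M.act π x) = π '' suppAct M.act x := by
  apply Set.Subset.antisymm (M.suppAct_act_subset x hπ)
  intro a ha
  obtain ⟨b, hb, rfl⟩ := ha
  have h2 := M.suppAct_act_subset (M.act π x) hπ.inv
  rw [M.act_inv_act] at h2
  obtain ⟨c, hc, hcb⟩ := h2 hb
  have : π b = c := by rw [← hcb, (show π (π⁻¹ c) = c from π.apply_symm_apply c)]
  exact this ▸ hc

lemma act_eq_of_suppAct_empty {x : X} (hx : suppAct M.act x = ∅) :
    ∀ π : Equiv.Perm Atom, IsFinPerm π → M.act π x = x := by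
  have hswap : ∀ a b : Atom, M.act (Equiv.swap a b) x = x := by
    intro a b
    rcases eq_or_ne a b with rfl | hab
    · rw [Equiv.swap_self]; exact M.act_one x
    have ha : a ∉ suppAct M.act x := by rw [hx]; exact Set.notMem_empty a
    have hb : b ∉ suppAct M.act x := by rw [hx]; exact Set.notMem_empty b
    obtain ⟨Na, hNa, hsa, haa⟩ := M.not_mem_suppAct ha
    obtain ⟨Nb, hNb, hsb, hbb⟩ := M.not_mem_suppAct hb
    obtain ⟨c, hc⟩ := exists_fresh _ (((hNa.union hNb).union ((Set.finite_singleton b).insert a)))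
    simp only [Set.mem_compl_iff, Set.mem_union, Set.mem_insert_iff,
      Set.mem_singleton_iff, not_or] at hc
    obtain ⟨⟨hcNa, hcNb⟩, hca, hcb⟩ := hc
    have key : Equiv.swap a b = Equiv.swap a c * Equiv.swap b c * Equiv.swap a c := by
      have := Equiv.swap_apply_apply (Equiv.swap a c) b c
      rw [Equiv.swap_apply_of_ne_of_ne (Ne.symm hab) (Ne.symm hcb),
        Equiv.swap_apply_right] at this
      rw [Equiv.swap_comm, this, Equiv.swap_inv]
    rw [key, M.act_mul, M.act_mul, M.act_swap_fix hsa haa hcNa,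
      M.act_swap_fix hsb hbb hcNb, M.act_swap_fix hsa haa hcNa]
  have main : ∀ (n : ℕ) (π : Equiv.Perm Atom) (s : Finset Atom),
      {a | π a ≠ a} ⊆ ↑s → s.card ≤ n → M.act π x = x := by
    intro n
    induction n with
    | zero =>
      intro π s hsub hcard
      have hπ1 : π = 1 := by
        ext a
        by_contra h
        have h2 : a ∈ (↑s : Set Atom) := hsub (by simpa using h)
        rw [Finset.card_eq_zero.mp (Nat.le_zero.mp hcard)] at h2
        simpa using h2
      rw [hπ1]; exact M.act_one x
    | succ n ih =>
      intro π s hsub hcard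
      by_cases h1 : π = 1
      · rw [h1]; exact M.act_one x
      obtain ⟨a, ha⟩ : ∃ a, π a ≠ a := by
        by_contra h; push_neg at h; exact h1 (Equiv.ext h)
      set b := π a with hb
      set π' := Equiv.swap a b * π with hπ'
      have hπ'a : π' a = a := by
        simp [hπ', ← hb, Equiv.swap_apply_right]
      have hsub' : {c | π' c ≠ c} ⊆ ↑(s.erase a) := by
        intro c hc
        have hca : c ≠ a := fun h => hc (h ▸ hπ'a)
        have hπc : π c ≠ c := by
          intro hfix
          apply hc
          have hcb : c ≠ b := by
            intro h
            rw [h] at hfix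
            rw [hb] at hfix
            exact ha (π.injective hfix)
          show π' c = c
          rw [hπ']
          simp only [Equiv.Perm.mul_apply, hfix]
          exact Equiv.swap_apply_of_ne_of_ne hca hcb
        simp only [Finset.coe_erase, Set.mem_diff, Set.mem_singleton_iff]
        exact ⟨hsub hπc, hca⟩
      have hacard : a ∈ s := hsub ha
      have : (s.erase a).card ≤ n := by
        rw [Finset.card_erase_of_mem hacard]
        omega
      have hres := ih π' (s.erase a) hsub' this
      have : π = Equiv.swap a b * π' := by
        rw [hπ', ← mul_assoc, Equiv.swap_mul_self, one_mul]
      rw [this, M.act_mul, hres, hswap]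
  intro π hπ
  exact main hπ.toFinset.card π hπ.toFinset (by intro a ha; exact hπ.mem_toFinset.mpr ha) le_rfl

end Nominal

-- ### NTS level auxiliary lemmas

section NTSAux

variable (T : NTS S Pr Ac) (τ : Ac)

lemma tauStar_trans {P Q R : S} (h1 : TauStar T τ P Q) :
    TauStar T τ Q R → TauStar T τ P R := by
  induction h1 with
  | refl _ => exact id
  | step htr _ ih => exact fun h2 => TauStar.step htr (ih h2)

lemma act_tau (hτ : suppAct T.nomA.act τ = ∅) {π : Equiv.Perm Atom} (hπ : IsFinPerm π) : T.nomA.act π τ = τ :=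
  T.nomA.act_eq_of_suppAct_empty hτ π hπ

lemma tauStar_eqv (hτ : suppAct T.nomA.act τ = ∅) {π : Equiv.Perm Atom} (hπ : IsFinPerm π) {P P' : S}
    (h : TauStar T τ P P') : TauStar T τ (T.nomS.act π P) (T.nomS.act π P') := by
  induction h with
  | refl P => exact TauStar.refl _
  | step htr _ ih =>
    refine TauStar.step ?_ ih
    have := T.tr_eqv π hπ _ _ _ htr
    rwa [act_tau T τ hτ hπ] at this

lemma weakTr_tau_iff {P P' : S} : T.weakTr τ P τ P' ↔ TauStar T τ P P' := by
  unfold NTS.weakTr; rw [if_pos rfl]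

lemma tr_weakTr {P : S} {α : Ac} {P' : S} (h : T.tr P α P') : T.weakTr τ P α P' := by
  unfold NTS.weakTr
  by_cases hα : α = τ
  · subst hα; rw [if_pos rfl]; exact TauStar.step h (TauStar.refl _)
  · rw [if_neg hα]; exact ⟨P, P', TauStar.refl _, h, TauStar.refl _⟩

lemma weakTr_prepend {P₀ P : S} {α : Ac} {P' : S} (h0 : TauStar T τ P₀ P)
    (h : T.weakTr τ P α P') : T.weakTr τ P₀ α P' := by
  unfold NTS.weakTr at h ⊢
  by_cases hα : α = τ
  · rw [if_pos hα] at h ⊢; exact tauStar_trans T τ h0 h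
  · rw [if_neg hα] at h ⊢
    obtain ⟨P₁, P₂, h1, h2, h3⟩ := h
    exact ⟨P₁, P₂, tauStar_trans T τ h0 h1, h2, h3⟩

lemma weakTr_append {P : S} {α : Ac} {P' P₀ : S} (h : T.weakTr τ P α P')
    (h0 : TauStar T τ P' P₀) : T.weakTr τ P α P₀ := by
  unfold NTS.weakTr at h ⊢
  by_cases hα : α = τ
  · rw [if_pos hα] at h ⊢; exact tauStar_trans T τ h h0
  · rw [if_neg hα] at h ⊢
    obtain ⟨P₁, P₂, h1, h2, h3⟩ := h
    exact ⟨P₁, P₂, h1, h2, tauStar_trans T τ h3 h0⟩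

lemma weakTr_eqv (hτ : suppAct T.nomA.act τ = ∅) {π : Equiv.Perm Atom} (hπ : IsFinPerm π) {P : S} {α : Ac} {P' : S}
    (h : T.weakTr τ P α P') :
    T.weakTr τ (T.nomS.act π P) (T.nomA.act π α) (T.nomS.act π P') := by
  by_cases hα : α = τ
  · rw [hα] at h ⊢
    rw [NTS.weakTr, if_pos rfl] at h
    rw [NTS.weakTr, if_pos (act_tau T τ hτ hπ)]
    exact tauStar_eqv T τ hτ hπ h
  · have hπα : T.nomA.act π α ≠ τ := by
      intro hc
      apply hα
      have := congrArg (T.nomA.act π⁻¹) hc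
      rwa [T.nomA.act_inv_act, act_tau T τ hτ hπ.inv] at this
    rw [NTS.weakTr, if_neg hα] at h
    rw [NTS.weakTr, if_neg hπα]
    obtain ⟨P₁, P₂, h1, h2, h3⟩ := h
    exact ⟨_, _, tauStar_eqv T τ hτ hπ h1, T.tr_eqv π hπ _ _ _ h2,
      tauStar_eqv T τ hτ hπ h3⟩

lemma wbisim_isWeakBisim : T.IsWeakBisim τ (T.WBisim τ) := by
  constructor
  · rintro P Q ⟨R, hR, hr⟩
    exact ⟨R, hR, hR.1 _ _ hr⟩
  · rintro P Q ⟨R, hR, hr⟩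
    obtain ⟨hstat, hsim⟩ := hR.2 P Q hr
    constructor
    · intro φ hφ
      obtain ⟨Q', h1, h2, h3⟩ := hstat φ hφ
      exact ⟨Q', h1, h2, R, hR, h3⟩
    · intro α P' hfresh htr
      obtain ⟨Q', h1, h2⟩ := hsim α P' hfresh htr
      exact ⟨Q', h1, R, hR, h2⟩

lemma bn_tau_fresh (hτ : suppAct T.nomA.act τ = ∅) (Q : S) : ∀ a ∈ T.bn τ, a ∉ suppAct T.nomS.act Q := by
  intro a ha
  have h2 : a ∈ suppAct T.nomA.act τ := T.bn_supp τ (Finset.mem_coe.mpr ha)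
  rw [hτ] at h2
  exact absurd h2 (Set.notMem_empty a)

lemma wbisim_tauStar_sim (hτ : suppAct T.nomA.act τ = ∅) {P P' Q : S} (h : T.WBisim τ P Q) (hs : TauStar T τ P P') :
    ∃ Q', TauStar T τ Q Q' ∧ T.WBisim τ P' Q' := by
  induction hs generalizing Q with
  | refl P => exact ⟨Q, TauStar.refl _, h⟩
  | step htr _ ih =>
    have hsim := ((wbisim_isWeakBisim T τ).2 _ _ h).2
    obtain ⟨Q₁, hw, hb⟩ := hsim τ _ (bn_tau_fresh T τ hτ Q) htr
    rw [weakTr_tau_iff] at hw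
    obtain ⟨Q', h1, h2⟩ := ih hb
    exact ⟨Q', tauStar_trans T τ hw h1, h2⟩

lemma wbisim_symm {P Q : S} (h : T.WBisim τ P Q) : T.WBisim τ Q P :=
  (wbisim_isWeakBisim T τ).1 P Q h

lemma wbisim_eqv (hτ : suppAct T.nomA.act τ = ∅) {π : Equiv.Perm Atom} (hπ : IsFinPerm π) {P Q : S}
    (h : T.WBisim τ P Q) : T.WBisim τ (T.nomS.act π P) (T.nomS.act π Q) := by
  obtain ⟨R, hR, hr⟩ := h
  refine ⟨fun P Q => R (T.nomS.act π⁻¹ P) (T.nomS.act π⁻¹ Q), ⟨?_, ?_⟩, ?_⟩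
  · exact fun P Q h => hR.1 _ _ h
  · intro P Q hpq
    obtain ⟨hstat, hsim⟩ := hR.2 _ _ hpq
    constructor
    · intro φ hφ
      have hφ' := T.sat_eqv π⁻¹ hπ.inv P φ hφ
      obtain ⟨Q₁, h1, h2, h3⟩ := hstat _ hφ'
      refine ⟨T.nomS.act π Q₁, ?_, ?_, ?_⟩
      · have := tauStar_eqv T τ hτ hπ h1
        rwa [T.nomS.act_act_inv] at this
      · have := T.sat_eqv π hπ _ _ h2
        rwa [T.nomP.act_act_inv] at this
      · show R (T.nomS.act π⁻¹ P) (T.nomS.act π⁻¹ (T.nomS.act π Q₁))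
        rwa [T.nomS.act_inv_act]
    · intro α P' hfresh htr
      have htr' := T.tr_eqv π⁻¹ hπ.inv _ _ _ htr
      have hfresh' : ∀ a ∈ T.bn (T.nomA.act π⁻¹ α),
          a ∉ suppAct T.nomS.act (T.nomS.act π⁻¹ Q) := by
        intro a ha hmem
        have ha' : a ∈ (π⁻¹ : Equiv.Perm Atom) '' (T.bn α : Set Atom) := by
          rw [← T.bn_eqv π⁻¹ hπ.inv α]; exact Finset.mem_coe.mpr ha
        obtain ⟨c, hc, rfl⟩ := ha'
        rw [T.nomS.suppAct_act Q hπ.inv] at hmem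
        obtain ⟨d, hd, hde⟩ := hmem
        have : d = c := (π⁻¹ : Equiv.Perm Atom).injective hde
        exact hfresh c (Finset.mem_coe.mp hc) (this ▸ hd)
      obtain ⟨Q₁, h1, h2⟩ := hsim _ _ hfresh' htr'
      refine ⟨T.nomS.act π Q₁, ?_, ?_⟩
      · have := weakTr_eqv T τ hτ hπ h1
        rwa [T.nomS.act_act_inv, T.nomA.act_act_inv] at this
      · show R (T.nomS.act π⁻¹ P') (T.nomS.act π⁻¹ (T.nomS.act π Q₁))
        rwa [T.nomS.act_inv_act]
  · show R (T.nomS.act π⁻¹ (T.nomS.act π P)) (T.nomS.act π⁻¹ (T.nomS.act π Q))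
    rwa [T.nomS.act_inv_act, T.nomS.act_inv_act]

end NTSAux

section NTSAux2

variable (T : NTS S Pr Ac) (τ : Ac)

lemma alpha_convert (P₁ Q : S) (F : Finset Atom) :
    ∀ (n : ℕ) (α : Ac) (P₂ : S), T.tr P₁ α P₂ →
    (∀ a ∈ T.bn α, a ∉ suppAct T.nomS.act Q) →
    ((T.bn α).filter (· ∈ F)).card ≤ n →
    ∃ π : Equiv.Perm Atom, IsFinPerm π ∧
      T.tr P₁ (T.nomA.act π α) (T.nomS.act π P₂) ∧
      (∀ a ∈ T.bn (T.nomA.act π α), a ∉ F) ∧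
      T.nomS.act π Q = Q := by
  intro n
  induction n with
  | zero =>
    intro α P₂ htr _ hcard
    refine ⟨1, isFinPerm_one, ?_, ?_, T.nomS.act_one Q⟩
    · rw [T.nomA.act_one, T.nomS.act_one]; exact htr
    · rw [T.nomA.act_one]
      intro a ha haF
      have hmem : a ∈ (T.bn α).filter (· ∈ F) := Finset.mem_filter.mpr ⟨ha, haF⟩
      rw [Finset.card_eq_zero.mp (Nat.le_zero.mp hcard)] at hmem
      simp at hmem
  | succ n ih =>
    intro α P₂ htr hyp hcard
    by_cases hemp : ((T.bn α).filter (· ∈ F)) = ∅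
    · refine ⟨1, isFinPerm_one, ?_, ?_, T.nomS.act_one Q⟩
      · rw [T.nomA.act_one, T.nomS.act_one]; exact htr
      · rw [T.nomA.act_one]
        intro a ha haF
        have hmem : a ∈ (T.bn α).filter (· ∈ F) := Finset.mem_filter.mpr ⟨ha, haF⟩
        rw [hemp] at hmem
        simp at hmem
    · obtain ⟨a, hamem⟩ := Finset.nonempty_iff_ne_empty.mpr hemp
      have habn : a ∈ T.bn α := (Finset.mem_filter.mp hamem).1
      obtain ⟨Na, hNafin, hNas, haNa⟩ := T.nomS.not_mem_suppAct (hyp a habn)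
      obtain ⟨G, hGfin, hGs⟩ := T.nomS.finSupp Q
      obtain ⟨b, hb⟩ := exists_fresh
        (suppAct T.nomA.act α ∪ suppAct T.nomS.act P₂ ∪ ↑F ∪ Na ∪ G)
        (((((T.nomA.suppAct_finite α).union (T.nomS.suppAct_finite P₂)).union
          F.finite_toSet).union hNafin).union hGfin)
      simp only [Set.mem_union, not_or] at hb
      obtain ⟨⟨⟨⟨hbα, hbP₂⟩, hbF⟩, hbNa⟩, hbG⟩ := hb
      have htr' := T.tr_alpha a b _ α P₂ habn hbα hbP₂ htr
      set sw := Equiv.swap a b with hsw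
      have hswfin := isFinPerm_swap a b
      have hbnot : b ∉ T.bn α := fun hmem => hbα (T.bn_supp α (Finset.mem_coe.mpr hmem))
      have hstep : ∀ c, c ∈ T.bn (T.nomA.act sw α) → c = b ∨ (c ∈ T.bn α ∧ c ≠ a) := by
        intro c hc
        have hc' : c ∈ sw '' (T.bn α : Set Atom) := by
          rw [← T.bn_eqv sw hswfin α]; exact Finset.mem_coe.mpr hc
        obtain ⟨d, hd, rfl⟩ := hc'
        rcases eq_or_ne d a with rfl | hda
        · left; exact Equiv.swap_apply_left d b
        rcases eq_or_ne d b with rfl | hdb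
        · exact absurd (Finset.mem_coe.mp hd) hbnot
        · right
          rw [hsw, Equiv.swap_apply_of_ne_of_ne hda hdb]
          exact ⟨Finset.mem_coe.mp hd, hda⟩
      have hyp' : ∀ c ∈ T.bn (T.nomA.act sw α), c ∉ suppAct T.nomS.act Q := by
        intro c hc
        rcases hstep c hc with rfl | ⟨hcb, _⟩
        · exact fun hmem => hbG (T.nomS.suppAct_subset hGfin hGs hmem)
        · exact hyp c hcb
      have hcard' : ((T.bn (T.nomA.act sw α)).filter (· ∈ F)).card ≤ n := by
        have hsub : (T.bn (T.nomA.act sw α)).filter (· ∈ F) ⊆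
            ((T.bn α).filter (· ∈ F)).erase a := by
          intro c hc
          obtain ⟨hc1, hc2⟩ := Finset.mem_filter.mp hc
          rcases hstep c hc1 with rfl | ⟨hcb, hca⟩
          · exact absurd (Finset.mem_coe.mpr hc2) hbF
          · exact Finset.mem_erase.mpr ⟨hca, Finset.mem_filter.mpr ⟨hcb, hc2⟩⟩
        calc ((T.bn (T.nomA.act sw α)).filter (· ∈ F)).card
            ≤ (((T.bn α).filter (· ∈ F)).erase a).card := Finset.card_le_card hsub
          _ = ((T.bn α).filter (· ∈ F)).card - 1 := Finset.card_erase_of_mem hamem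
          _ ≤ n := by omega
      obtain ⟨π', hπ'fin, hπ'tr, hπ'bn, hπ'Q⟩ := ih _ _ htr' hyp' hcard'
      refine ⟨π' * sw, hπ'fin.mul hswfin, ?_, ?_, ?_⟩
      · rw [T.nomA.act_mul, T.nomS.act_mul]; exact hπ'tr
      · rw [T.nomA.act_mul]; exact hπ'bn
      · rw [T.nomS.act_mul, T.nomS.act_swap_fix hNas haNa hbNa]; exact hπ'Q

variable (hτ : suppAct T.nomA.act τ = ∅)

lemma wbisim_weak_sim (hτ : suppAct T.nomA.act τ = ∅) {P Q P' : S} {α : Ac}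
    (h : T.WBisim τ P Q) (hw : T.weakTr τ P α P')
    (hfresh : ∀ a ∈ T.bn α, a ∉ suppAct T.nomS.act Q) :
    ∃ Q', T.weakTr τ Q α Q' ∧ T.WBisim τ P' Q' := by
  by_cases hα : α = τ
  · rw [hα] at hw ⊢
    rw [weakTr_tau_iff] at hw
    obtain ⟨Q', h1, h2⟩ := wbisim_tauStar_sim T τ hτ h hw
    exact ⟨Q', (weakTr_tau_iff T τ).mpr h1, h2⟩
  · rw [NTS.weakTr, if_neg hα] at hw
    obtain ⟨P₁, P₂, hs1, hstep, hs2⟩ := hw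
    obtain ⟨Q₁, hq1, hb1⟩ := wbisim_tauStar_sim T τ hτ h hs1
    obtain ⟨F', hF'⟩ : ∃ F' : Finset Atom, suppAct T.nomS.act Q₁ ⊆ ↑F' :=
      ⟨(T.nomS.suppAct_finite Q₁).toFinset, by simp⟩
    obtain ⟨π, hπfin, hπtr, hπbn, hπQ⟩ :=
      alpha_convert T P₁ Q F' _ α P₂ hstep hfresh le_rfl
    have hfresh1 : ∀ a ∈ T.bn (T.nomA.act π α), a ∉ suppAct T.nomS.act Q₁ :=
      fun a ha hmem => hπbn a ha (hF' hmem)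
    obtain ⟨Q₂, hq2, hb2⟩ := ((wbisim_isWeakBisim T τ).2 _ _ hb1).2 _ _ hfresh1 hπtr
    have hw2 := weakTr_prepend T τ hq1 hq2
    have hw3 := weakTr_eqv T τ hτ hπfin.inv hw2
    rw [T.nomA.act_inv_act] at hw3
    have hQfix : T.nomS.act π⁻¹ Q = Q := by
      have h9 := congrArg (T.nomS.act π⁻¹) hπQ
      rw [T.nomS.act_inv_act] at h9
      exact h9.symm
    rw [hQfix] at hw3
    have hb3 := wbisim_eqv T τ hτ hπfin.inv hb2
    rw [T.nomS.act_inv_act] at hb3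
    obtain ⟨Q₃, hq3, hb4⟩ := wbisim_tauStar_sim T τ hτ hb3 hs2
    exact ⟨Q₃, weakTr_append T τ hw3 hq3, hb4⟩

end NTSAux2


/-- Weak bisimilarity is an equivariant equivalence relation: reflexive, symmetric,
transitive, and closed under finite name permutations.  Here `τ` is the unobservable
action, which has empty support. -/
theorem wbisim_equivalence_equivariant {S Pr Ac : Type} (T : NTS S Pr Ac) (τ : Ac)
    (hτ : suppAct T.nomA.act τ = ∅) :
    (∀ P, T.WBisim τ P P) ∧
    (∀ P Q, T.WBisim τ P Q → T.WBisim τ Q P) ∧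
    (∀ P Q R, T.WBisim τ P Q → T.WBisim τ Q R → T.WBisim τ P R) ∧
    (∀ π : Equiv.Perm Atom, IsFinPerm π → ∀ P Q, T.WBisim τ P Q →
      T.WBisim τ (T.nomS.act π P) (T.nomS.act π Q)) := by
  have hrefl : T.IsWeakBisim τ (fun P Q => P = Q) := by
    constructor
    · exact fun P Q h => h.symm
    · rintro P Q rfl
      exact ⟨fun φ hφ => ⟨P, TauStar.refl _, hφ, rfl⟩,
        fun α P' _ htr => ⟨P', tr_weakTr T τ htr, rfl⟩⟩
  have htrans : T.IsWeakBisim τ (fun P R' => ∃ Q, T.WBisim τ P Q ∧ T.WBisim τ Q R') := by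
    constructor
    · rintro P R' ⟨Q, h1, h2⟩
      exact ⟨Q, wbisim_symm T τ h2, wbisim_symm T τ h1⟩
    · rintro P R₀ ⟨Q, h1, h2⟩
      constructor
      · intro φ hφ
        obtain ⟨Q', hq1, hsat1, hb1⟩ := ((wbisim_isWeakBisim T τ).2 _ _ h1).1 φ hφ
        obtain ⟨R₁, hr1, hb2⟩ := wbisim_tauStar_sim T τ hτ h2 hq1
        obtain ⟨R₂, hr2, hsat2, hb3⟩ := ((wbisim_isWeakBisim T τ).2 _ _ hb2).1 φ hsat1
        exact ⟨R₂, tauStar_trans T τ hr1 hr2, hsat2, Q', hb1, hb3⟩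
      · intro α P' hfresh htr
        obtain ⟨π, hπfin, hπtr, hπbn, hπR₀⟩ := alpha_convert T P R₀
          ((T.nomS.suppAct_finite Q).toFinset ∪ (T.nomS.suppAct_finite R₀).toFinset)
          _ α P' htr hfresh le_rfl
        have hfq : ∀ a ∈ T.bn (T.nomA.act π α), a ∉ suppAct T.nomS.act Q :=
          fun a ha hm => hπbn a ha
            (Finset.mem_union_left _ ((T.nomS.suppAct_finite Q).mem_toFinset.mpr hm))
        have hfr : ∀ a ∈ T.bn (T.nomA.act π α), a ∉ suppAct T.nomS.act R₀ :=
          fun a ha hm => hπbn a ha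
            (Finset.mem_union_right _ ((T.nomS.suppAct_finite R₀).mem_toFinset.mpr hm))
        obtain ⟨Q', hwq, hbq⟩ := ((wbisim_isWeakBisim T τ).2 _ _ h1).2 _ _ hfq hπtr
        obtain ⟨R₁, hwr, hbr⟩ := wbisim_weak_sim T τ hτ h2 hwq hfr
        have hw3 := weakTr_eqv T τ hτ hπfin.inv hwr
        rw [T.nomA.act_inv_act] at hw3
        have hRfix : T.nomS.act π⁻¹ R₀ = R₀ := by
          have h9 := congrArg (T.nomS.act π⁻¹) hπR₀
          rw [T.nomS.act_inv_act] at h9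
          exact h9.symm
        rw [hRfix] at hw3
        have hbq' := wbisim_eqv T τ hτ hπfin.inv hbq
        rw [T.nomS.act_inv_act] at hbq'
        have hbr' := wbisim_eqv T τ hτ hπfin.inv hbr
        exact ⟨T.nomS.act π⁻¹ R₁, hw3, T.nomS.act π⁻¹ Q', hbq', hbr'⟩
  refine ⟨?_, ?_, ?_, ?_⟩
  · intro P; exact ⟨_, hrefl, rfl⟩
  · intro P Q h; exact wbisim_symm T τ h
  · intro P Q R h1 h2; exact ⟨_, htrans, Q, h1, h2⟩
  · intro π hπ P Q h; exact wbisim_eqv T τ hτ hπ h
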